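/- Assume (C, E, s) is an n-exangulated category in which, for every object X, the morphism X → 0 is a trivial inflation and the morphism 0 → X is a trivial deflation; for each object X fix a distinguished n-exangle X → 0 → ⋯ → 0 → ΣX ⇢(δ_X), let E¹ := C(−, Σ−), and let 𝔯 be the exact realization of E¹ given by 𝔯(ε) := s(ε* δ_{X₀}). Then (EA1) holds for (C, E¹, 𝔯): if f : A → B and g : B → C are both 𝔯-inflations then g ∘ f is an 𝔯-inflation, and if f and g are both 𝔯-deflations then g ∘ f is an 𝔯-deflation. -/

import Mathlib

/-!
Common definitions: complexes of length `n+2`, `n`-exangulated categories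
(Herschend–Liu–Nakaoka), and `(n+2)`-angulated categories
(Geiss–Keller–Oppermann), formalized from scratch.
-/

open CategoryTheory CategoryTheory.Limits Opposite ZeroObject

universe v u

namespace Paper

/-- A complex concentrated in degrees `0, …, n+1`.  Only the objects in degrees
`0, …, n+1` and the differentials `d 0, …, d n` carry information; all objects in
higher degrees are required to be zero. -/
structure ExCpx (n : ℕ) (C : Type u) [Category.{v} C] [Preadditive C] [HasZeroObject C] where
  obj : ℕ → C
  d : ∀ i, obj i ⟶ obj (i + 1)
  dd : ∀ i, i + 1 ≤ n → d i ≫ d (i + 1) = 0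
  isZero_of_gt : ∀ i, n + 1 < i → IsZero (obj i)

variable {C : Type u} [Category.{v} C] [Preadditive C] [HasZeroObject C] [HasFiniteBiproducts C] [HasBinaryBiproducts C]

/-- Morphisms of complexes of length `n+2`. -/
structure CpxHom {n : ℕ} (X Y : ExCpx n C) where
  f : ∀ i, X.obj i ⟶ Y.obj i
  comm : ∀ i, i ≤ n → X.d i ≫ f (i + 1) = f i ≫ Y.d i

/-- The identity morphism of a complex. -/
def CpxHom.id {n : ℕ} (X : ExCpx n C) : CpxHom X X :=
  ⟨fun _ => 𝟙 _, fun i _ => by simp⟩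

/-- Composition of morphisms of complexes. -/
def CpxHom.comp {n : ℕ} {X Y Z : ExCpx n C} (φ : CpxHom X Y) (ψ : CpxHom Y Z) : CpxHom X Z :=
  ⟨fun i => φ.f i ≫ ψ.f i, fun i hi => by
    rw [← Category.assoc, φ.comm i hi, Category.assoc, ψ.comm i hi, ← Category.assoc]⟩

/-- Chain homotopy between two morphisms of complexes of length `n+2`,
for complexes concentrated in degrees `0, …, n+1`. -/
def Homotopic (n : ℕ) {X Y : ExCpx n C} (φ ψ : CpxHom X Y) : Prop :=
  ∃ h : ∀ i, X.obj (i + 1) ⟶ Y.obj i,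
    (φ.f 0 - ψ.f 0 = X.d 0 ≫ h 0) ∧
    (∀ i, i + 1 ≤ n → φ.f (i + 1) - ψ.f (i + 1) = X.d (i + 1) ≫ h (i + 1) + h i ≫ Y.d i) ∧
    (φ.f (n + 1) - ψ.f (n + 1) = h n ≫ Y.d n)

/-- Homotopy equivalence of complexes which is the identity on the two end terms. -/
def FixedEndsHtpyEquiv (n : ℕ) (X Y : ExCpx n C) (h0 : X.obj 0 = Y.obj 0)
    (h1 : X.obj (n + 1) = Y.obj (n + 1)) : Prop :=
  ∃ (u : CpxHom X Y) (v : CpxHom Y X),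
    u.f 0 = eqToHom h0 ∧ u.f (n + 1) = eqToHom h1 ∧
    v.f 0 = eqToHom h0.symm ∧ v.f (n + 1) = eqToHom h1.symm ∧
    Homotopic n (u.comp v) (CpxHom.id X) ∧ Homotopic n (v.comp u) (CpxHom.id Y)

/-- `EE E B A` is the abelian group `E(B, A)` of `E`-extensions. -/
abbrev EE (E : Cᵒᵖ ⥤ C ⥤ AddCommGrpCat.{v}) (B A : C) : Type v := (E.obj (op B)).obj A

/-- Covariant action `f_* δ` of `E` on extensions. -/
def push {E : Cᵒᵖ ⥤ C ⥤ AddCommGrpCat.{v}} {B A A' : C} (f : A ⟶ A') (δ : EE E B A) :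
    EE E B A' := ((E.obj (op B)).map f) δ

/-- Contravariant action `g^* δ` of `E` on extensions. -/
def pull {E : Cᵒᵖ ⥤ C ⥤ AddCommGrpCat.{v}} {B B' A : C} (g : B' ⟶ B) (δ : EE E B A) :
    EE E B' A := ((E.map g.op).app A) δ

/-- Transport of extensions along equalities of objects. -/
def castE {E : Cᵒᵖ ⥤ C ⥤ AddCommGrpCat.{v}} {B B' A A' : C} (hB : B = B') (hA : A = A')
    (δ : EE E B A) : EE E B' A' := by subst hB; subst hA; exact δ

/-- The type of a "distinguished `n`-exangle" predicate. -/
def DistType (n : ℕ) (C : Type u) [Category.{v} C] [Preadditive C] [HasZeroObject C]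
    (E : Cᵒᵖ ⥤ C ⥤ AddCommGrpCat.{v}) : Type (max u v) :=
  ∀ X : ExCpx n C, EE E (X.obj (n + 1)) (X.obj 0) → Prop

/-- `f` is an inflation: it appears as the `0`-th differential of some
distinguished `n`-exangle. -/
def InflationOf {n : ℕ} {E : Cᵒᵖ ⥤ C ⥤ AddCommGrpCat.{v}} (D : DistType n C E)
    {A B : C} (f : A ⟶ B) : Prop :=
  ∃ (X : ExCpx n C) (δ : EE E (X.obj (n + 1)) (X.obj 0)) (h0 : X.obj 0 = A) (h1 : X.obj 1 = B),
    D X δ ∧ X.d 0 = eqToHom h0 ≫ f ≫ eqToHom h1.symm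

/-- `f` is a deflation: it appears as the `n`-th differential of some
distinguished `n`-exangle. -/
def DeflationOf {n : ℕ} {E : Cᵒᵖ ⥤ C ⥤ AddCommGrpCat.{v}} (D : DistType n C E)
    {A B : C} (f : A ⟶ B) : Prop :=
  ∃ (X : ExCpx n C) (δ : EE E (X.obj (n + 1)) (X.obj 0)) (h0 : X.obj n = A)
    (h1 : X.obj (n + 1) = B),
    D X δ ∧ X.d n = eqToHom h0 ≫ f ≫ eqToHom h1.symm

/-- The mapping cone of a morphism of complexes whose `0`-th component is
(an identity up to equality of objects):
`X₁ → X₂ ⊕ Y₁ → ⋯ → X_{n+1} ⊕ Yₙ → Y_{n+1}` with the usual matrix differentials. -/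
def IsMappingCone (n : ℕ) {X Y : ExCpx n C} (φ : CpxHom X Y) (M : ExCpx n C) : Prop :=
  ∃ (e0 : M.obj 0 = X.obj 1) (etop : M.obj (n + 1) = Y.obj (n + 1))
    (emid : ∀ i, 1 ≤ i → i ≤ n → M.obj i = ((X.obj (i + 1)) ⊞ (Y.obj i))),
    (∀ hn : 1 ≤ n,
      M.d 0 = eqToHom e0 ≫ biprod.lift (-(X.d 1)) (φ.f 1) ≫ eqToHom (emid 1 le_rfl hn).symm) ∧
    (∀ i (h1 : 1 ≤ i) (h2 : i + 1 ≤ n),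
      M.d i = eqToHom (emid i (by omega) (by omega)) ≫
        biprod.desc (biprod.lift (-(X.d (i + 1))) (φ.f (i + 1))) (biprod.lift 0 (Y.d i)) ≫
        eqToHom (emid (i + 1) (by omega) (by omega)).symm) ∧
    (∀ hn : 1 ≤ n,
      M.d n = eqToHom (emid n hn le_rfl) ≫ biprod.desc (φ.f (n + 1)) (Y.d n) ≫ eqToHom etop.symm)

/-- The mapping cocone of a morphism of complexes whose `(n+1)`-st component is
(an identity up to equality of objects):
`X₀ → Y₀ ⊕ X₁ → ⋯ → Y_{n-1} ⊕ Xₙ → Yₙ`. -/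
def IsMappingCocone (n : ℕ) {X Y : ExCpx n C} (φ : CpxHom X Y) (M : ExCpx n C) : Prop :=
  ∃ (e0 : M.obj 0 = X.obj 0) (etop : M.obj (n + 1) = Y.obj n)
    (emid : ∀ i, i + 1 ≤ n → M.obj (i + 1) = ((Y.obj i) ⊞ (X.obj (i + 1)))),
    (∀ hn : 1 ≤ n,
      M.d 0 = eqToHom e0 ≫ biprod.lift (φ.f 0) (X.d 0) ≫ eqToHom (emid 0 hn).symm) ∧
    (∀ i (h2 : i + 2 ≤ n),
      M.d (i + 1) = eqToHom (emid i (by omega)) ≫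
        biprod.desc (biprod.lift (-(Y.d i)) 0) (biprod.lift (φ.f (i + 1)) (X.d (i + 1))) ≫
        eqToHom (emid (i + 1) (by omega)).symm) ∧
    (∀ i (hi : i + 1 = n),
      M.d (i + 1) = eqToHom (emid i hi.le) ≫
        biprod.desc (-(Y.d i) ≫ eqToHom (show Y.obj (i + 1) = Y.obj n by rw [hi]))
          (φ.f (i + 1) ≫ eqToHom (show Y.obj (i + 1) = Y.obj n by rw [hi])) ≫
        eqToHom (show Y.obj n = M.obj (i + 2) by subst hi; exact etop.symm))

/-- An `n`-exangulated structure `(𝔼, 𝔰)` on an additive category `C`: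
`Dist X δ` says that `⟨X, δ⟩` is a distinguished `n`-exangle (i.e. `𝔰(δ) = [X]`),
together with all the axioms of Herschend–Liu–Nakaoka: `𝔰` is an exact
realization ((R0), (R1), (R2), realizing every extension, with values in
homotopy classes of complexes with fixed end terms) satisfying (EA1), (EA2)
and (EA2op). -/
structure NExStruct (n : ℕ) (C : Type u) [Category.{v} C] [Preadditive C] [HasZeroObject C]
    [HasFiniteBiproducts C] [HasBinaryBiproducts C] (E : Cᵒᵖ ⥤ C ⥤ AddCommGrpCat.{v}) : Type (max u v) where
  Dist : DistType n C E
  /-- every extension is realized by some distinguished `n`-exangle -/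
  realize : ∀ {A B : C} (δ : EE E B A),
    ∃ (X : ExCpx n C) (h0 : X.obj 0 = A) (h1 : X.obj (n + 1) = B),
      Dist X (castE h1.symm h0.symm δ)
  /-- distinguished `n`-exangles are `E`-attached complexes -/
  attached_push : ∀ (X : ExCpx n C) (δ : EE E (X.obj (n + 1)) (X.obj 0)),
    Dist X δ → push (X.d 0) δ = 0
  attached_pull : ∀ (X : ExCpx n C) (δ : EE E (X.obj (n + 1)) (X.obj 0)),
    Dist X δ → pull (X.d n) δ = 0
  /-- the realization takes values in homotopy equivalence classes: closure -/
  dist_htpy : ∀ (X Y : ExCpx n C) (h0 : X.obj 0 = Y.obj 0) (h1 : X.obj (n + 1) = Y.obj (n + 1))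
    (δ : EE E (X.obj (n + 1)) (X.obj 0)),
    Dist X δ → FixedEndsHtpyEquiv n X Y h0 h1 → Dist Y (castE h1 h0 δ)
  /-- the realization takes values in homotopy equivalence classes: uniqueness -/
  dist_unique : ∀ (X Y : ExCpx n C) (h0 : X.obj 0 = Y.obj 0) (h1 : X.obj (n + 1) = Y.obj (n + 1))
    (δ : EE E (X.obj (n + 1)) (X.obj 0)),
    Dist X δ → Dist Y (castE h1 h0 δ) → FixedEndsHtpyEquiv n X Y h0 h1
  /-- (R0): morphisms of extensions lift to morphisms of the realizing complexes -/
  liftMor : ∀ (X Y : ExCpx n C) (δ : EE E (X.obj (n + 1)) (X.obj 0))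
    (ρ : EE E (Y.obj (n + 1)) (Y.obj 0)) (a : X.obj 0 ⟶ Y.obj 0)
    (c : X.obj (n + 1) ⟶ Y.obj (n + 1)),
    Dist X δ → Dist Y ρ → push a δ = pull c ρ →
    ∃ φ : CpxHom X Y, φ.f 0 = a ∧ φ.f (n + 1) = c
  /-- (R1), contravariant exactness at the middle terms -/
  exact_contra_mid : ∀ (X : ExCpx n C) (δ : EE E (X.obj (n + 1)) (X.obj 0)), Dist X δ →
    ∀ (W : C) (i : ℕ), i + 1 ≤ n → ∀ g : W ⟶ X.obj (i + 1),
      g ≫ X.d (i + 1) = 0 → ∃ h : W ⟶ X.obj i, h ≫ X.d i = g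
  /-- (R1), contravariant exactness at the last term -/
  exact_contra_top : ∀ (X : ExCpx n C) (δ : EE E (X.obj (n + 1)) (X.obj 0)), Dist X δ →
    ∀ (W : C) (g : W ⟶ X.obj (n + 1)), pull g δ = 0 → ∃ h : W ⟶ X.obj n, h ≫ X.d n = g
  /-- (R1), covariant exactness at the middle terms -/
  exact_cov_mid : ∀ (X : ExCpx n C) (δ : EE E (X.obj (n + 1)) (X.obj 0)), Dist X δ →
    ∀ (W : C) (i : ℕ), i + 1 ≤ n → ∀ g : X.obj (i + 1) ⟶ W,
      X.d i ≫ g = 0 → ∃ h : X.obj (i + 2) ⟶ W, X.d (i + 1) ≫ h = g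
  /-- (R1), covariant exactness at the first term -/
  exact_cov_bot : ∀ (X : ExCpx n C) (δ : EE E (X.obj (n + 1)) (X.obj 0)), Dist X δ →
    ∀ (W : C) (g : X.obj 0 ⟶ W), push g δ = 0 → ∃ h : X.obj 1 ⟶ W, X.d 0 ≫ h = g
  /-- (R2): the zero extension `0 ∈ E(0, A)` is realized by the trivial complex -/
  r2 : ∀ A : C, ∃ X : ExCpx n C, X.obj 0 = A ∧ IsIso (X.d 0) ∧
    (∀ i, 2 ≤ i → IsZero (X.obj i)) ∧ Dist X 0
  /-- (R2), dual: the zero extension `0 ∈ E(A, 0)` is realized by the trivial complex -/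
  r2op : ∀ A : C, ∃ X : ExCpx n C, X.obj (n + 1) = A ∧ IsIso (X.d n) ∧
    (∀ i, i + 1 ≤ n → IsZero (X.obj i)) ∧ Dist X 0
  /-- (EA1): compositions of inflations are inflations -/
  ea1_infl : ∀ {A B D : C} (f : A ⟶ B) (g : B ⟶ D),
    InflationOf Dist f → InflationOf Dist g → InflationOf Dist (f ≫ g)
  /-- (EA1): compositions of deflations are deflations -/
  ea1_defl : ∀ {A B D : C} (f : A ⟶ B) (g : B ⟶ D),
    DeflationOf Dist f → DeflationOf Dist g → DeflationOf Dist (f ≫ g)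
  /-- (EA2): good lifts exist -/
  ea2 : ∀ (X Y : ExCpx n C) (h0 : Y.obj 0 = X.obj 0) (ρ : EE E (Y.obj (n + 1)) (Y.obj 0))
    (c : X.obj (n + 1) ⟶ Y.obj (n + 1)),
    Dist Y ρ → Dist X (castE rfl h0 (pull c ρ)) →
    ∃ φ : CpxHom X Y, φ.f 0 = eqToHom h0.symm ∧ φ.f (n + 1) = c ∧
      ∃ (M : ExCpx n C) (hM0 : M.obj 0 = X.obj 1) (hMtop : M.obj (n + 1) = Y.obj (n + 1)),
        IsMappingCone n φ M ∧
        Dist M (castE hMtop.symm hM0.symm (push (eqToHom h0 ≫ X.d 0) ρ))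
  /-- (EA2op): dually, good lifts exist -/
  ea2op : ∀ (X Y : ExCpx n C) (htop : Y.obj (n + 1) = X.obj (n + 1))
    (ρ : EE E (Y.obj (n + 1)) (Y.obj 0)) (a : Y.obj 0 ⟶ X.obj 0),
    Dist Y ρ → Dist X (castE htop rfl (push a ρ)) →
    ∃ φ : CpxHom Y X, φ.f 0 = a ∧ φ.f (n + 1) = eqToHom htop ∧
      ∃ (M : ExCpx n C) (hM0 : M.obj 0 = Y.obj 0) (hMtop : M.obj (n + 1) = X.obj n),
        IsMappingCocone n φ M ∧
        Dist M (castE hMtop.symm hM0.symm (pull (X.d n ≫ eqToHom htop.symm) ρ))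

/-- The morphism `A → 0` is a trivial inflation: it embeds in a distinguished
`n`-exangle `A → 0 → ⋯ → 0 → Y ⇢ δ`. -/
def TrivialInflation {n : ℕ} {E : Cᵒᵖ ⥤ C ⥤ AddCommGrpCat.{v}} (σ : NExStruct n C E)
    (A : C) : Prop :=
  ∃ (X : ExCpx n C) (δ : EE E (X.obj (n + 1)) (X.obj 0)),
    σ.Dist X δ ∧ X.obj 0 = A ∧ ∀ i, 1 ≤ i → i ≤ n → IsZero (X.obj i)

/-- The morphism `0 → A` is a trivial deflation: it embeds in a distinguished
`n`-exangle `Z → 0 → ⋯ → 0 → A ⇢ δ`. -/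
def TrivialDeflation {n : ℕ} {E : Cᵒᵖ ⥤ C ⥤ AddCommGrpCat.{v}} (σ : NExStruct n C E)
    (A : C) : Prop :=
  ∃ (X : ExCpx n C) (δ : EE E (X.obj (n + 1)) (X.obj 0)),
    σ.Dist X δ ∧ X.obj (n + 1) = A ∧ ∀ i, 1 ≤ i → i ≤ n → IsZero (X.obj i)

/-- An `(n+2)`-`Σ`-sequence `A₀ → A₁ → ⋯ → A_{n+1} → Σ A₀`. -/
structure AngSeq (n : ℕ) (C : Type u) [Category.{v} C] (S : C ⥤ C) where
  obj : ℕ → C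
  d : ∀ i, obj i ⟶ obj (i + 1)
  last : obj (n + 1) ⟶ S.obj (obj 0)

/-- A morphism of `(n+2)`-`Σ`-sequences. -/
structure AngHom {n : ℕ} {S : C ⥤ C} (T T' : AngSeq n C S) where
  f : ∀ i, T.obj i ⟶ T'.obj i
  comm : ∀ i, i ≤ n → T.d i ≫ f (i + 1) = f i ≫ T'.d i
  comm_last : T.last ≫ S.map (f 0) = f (n + 1) ≫ T'.last

/-- `T` and `T'` are isomorphic `(n+2)`-`Σ`-sequences. -/
def IsIsoSeq (n : ℕ) {S : C ⥤ C} (T T' : AngSeq n C S) : Prop :=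
  ∃ φ : AngHom T T', ∀ i, i ≤ n + 1 → IsIso (φ.f i)

/-- `Z` is a direct sum of the `(n+2)`-`Σ`-sequences `X` and `Y`. -/
def IsDirectSumSeq (n : ℕ) {S : C ⥤ C} (Z X Y : AngSeq n C S) : Prop :=
  ∃ (p : AngHom Z X) (q : AngHom Z Y) (ix : AngHom X Z) (iy : AngHom Y Z),
    (∀ i, i ≤ n + 1 → ix.f i ≫ p.f i = 𝟙 _) ∧ (∀ i, i ≤ n + 1 → iy.f i ≫ q.f i = 𝟙 _) ∧
    (∀ i, i ≤ n + 1 → ix.f i ≫ q.f i = 0) ∧ (∀ i, i ≤ n + 1 → iy.f i ≫ p.f i = 0) ∧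
    (∀ i, i ≤ n + 1 → p.f i ≫ ix.f i + q.f i ≫ iy.f i = 𝟙 _)

/-- `R` is the left rotation of the `(n+2)`-`Σ`-sequence `T`. -/
def IsLeftRotation (n : ℕ) {S : C ⥤ C} (T R : AngSeq n C S) : Prop :=
  ∃ (e : ∀ i, i ≤ n → R.obj i = T.obj (i + 1)) (etop : R.obj (n + 1) = S.obj (T.obj 0)),
    (∀ i (hi : i + 1 ≤ n), R.d i = eqToHom (e i (by omega)) ≫ T.d (i + 1) ≫
      eqToHom (e (i + 1) hi).symm) ∧
    (R.d n = eqToHom (e n le_rfl) ≫ T.last ≫ eqToHom etop.symm) ∧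
    (R.last = eqToHom etop ≫ (((-1 : ℤ) ^ n) • S.map (T.d 0)) ≫
      eqToHom (congrArg S.obj (e 0 (Nat.zero_le n))).symm)

/-- `M` is the mapping cone of the morphism `Φ` of `(n+2)`-`Σ`-sequences. -/
def IsMappingConeSeq (n : ℕ) {S : C ⥤ C} {T T' : AngSeq n C S} (Φ : AngHom T T')
    (M : AngSeq n C S) : Prop :=
  ∃ (e : ∀ i, i ≤ n → M.obj i = ((T.obj (i + 1)) ⊞ (T'.obj i)))
    (etop : M.obj (n + 1) = ((S.obj (T.obj 0)) ⊞ (T'.obj (n + 1)))),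
    (∀ i (hi : i + 1 ≤ n), M.d i = eqToHom (e i (by omega)) ≫
        biprod.desc (biprod.lift (-(T.d (i + 1))) (Φ.f (i + 1))) (biprod.lift 0 (T'.d i)) ≫
        eqToHom (e (i + 1) hi).symm) ∧
    (M.d n = eqToHom (e n le_rfl) ≫
        biprod.desc (biprod.lift (-(T.last)) (Φ.f (n + 1))) (biprod.lift 0 (T'.d n)) ≫
        eqToHom etop.symm) ∧
    (M.last = eqToHom etop ≫
        biprod.desc ((-(S.map (T.d 0) ≫ S.map biprod.inl)) + (S.map (Φ.f 0) ≫ S.map biprod.inr))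
          (T'.last ≫ S.map biprod.inr) ≫
        eqToHom (congrArg S.obj (e 0 (Nat.zero_le n))).symm)

/-- An `(n+2)`-angulated structure `(Σ, Θ)` on an additive category `C`
(Geiss–Keller–Oppermann): `Σ = S` is an auto-equivalence, `Θ = Theta` is a class of
`(n+2)`-`Σ`-sequences satisfying the axioms (N1)–(N4). -/
structure NAngStruct (n : ℕ) (C : Type u) [Category.{v} C] [Preadditive C] [HasZeroObject C]
    [HasFiniteBiproducts C] [HasBinaryBiproducts C] (S : C ⥤ C) : Type (max u v) where
  /-- `Σ` is an auto-equivalence -/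
  eqv : S.IsEquivalence
  Theta : AngSeq n C S → Prop
  /-- (N1)(a): closed under isomorphisms -/
  iso_closed : ∀ T T' : AngSeq n C S, Theta T → IsIsoSeq n T T' → Theta T'
  /-- (N1)(a): closed under direct sums -/
  sum_closed : ∀ Z X Y : AngSeq n C S, Theta X → Theta Y → IsDirectSumSeq n Z X Y → Theta Z
  /-- (N1)(a): closed under direct summands -/
  summand_closed : ∀ Z X Y : AngSeq n C S, Theta Z → IsDirectSumSeq n Z X Y → Theta X
  /-- (N1)(b): trivial sequences belong to `Theta` -/
  trivial_mem : ∀ T : AngSeq n C S, IsIso (T.d 0) →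
    (∀ i, 2 ≤ i → i ≤ n + 1 → IsZero (T.obj i)) → Theta T
  /-- (N1)(c): every morphism extends to an `(n+2)`-angle -/
  extend_mor : ∀ {A B : C} (f : A ⟶ B), ∃ T : AngSeq n C S, Theta T ∧
    ∃ (h0 : T.obj 0 = A) (h1 : T.obj 1 = B), T.d 0 = eqToHom h0 ≫ f ≫ eqToHom h1.symm
  /-- (N2): `Theta` is closed under left rotation -/
  rot : ∀ T R : AngSeq n C S, IsLeftRotation n T R → Theta T → Theta R
  /-- (N2): `Theta` is closed under right rotation -/
  rot_inv : ∀ T R : AngSeq n C S, IsLeftRotation n T R → Theta R → Theta T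
  /-- (N3): commutative squares extend to morphisms of `(n+2)`-angles -/
  n3 : ∀ T T' : AngSeq n C S, Theta T → Theta T' →
    ∀ (φ0 : T.obj 0 ⟶ T'.obj 0) (φ1 : T.obj 1 ⟶ T'.obj 1), T.d 0 ≫ φ1 = φ0 ≫ T'.d 0 →
      ∃ Φ : AngHom T T', Φ.f 0 = φ0 ∧ Φ.f 1 = φ1
  /-- (N4): the fillers can be chosen so that the mapping cone belongs to `Theta` -/
  n4 : ∀ T T' : AngSeq n C S, Theta T → Theta T' →
    ∀ (φ0 : T.obj 0 ⟶ T'.obj 0) (φ1 : T.obj 1 ⟶ T'.obj 1), T.d 0 ≫ φ1 = φ0 ≫ T'.d 0 →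
      ∃ Φ : AngHom T T', Φ.f 0 = φ0 ∧ Φ.f 1 = φ1 ∧
        ∃ M : AngSeq n C S, IsMappingConeSeq n Φ M ∧ Theta M

/-- The `(n+2)`-angulated structure `α` on `C` is `E`-compatible with the
`n`-exangulated structure `σ`: every `(n+2)`-angle, viewed as a complex, is a
distinguished `n`-exangle for some extension `δ`. -/
def ECompatible {n : ℕ} {E : Cᵒᵖ ⥤ C ⥤ AddCommGrpCat.{v}} (σ : NExStruct n C E)
    {S : C ⥤ C} (α : NAngStruct n C S) : Prop :=
  ∀ T : AngSeq n C S, α.Theta T →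
    ∃ (X : ExCpx n C) (h : ∀ i, i ≤ n + 1 → X.obj i = T.obj i),
      (∀ i (hi : i ≤ n), X.d i = eqToHom (h i (by omega)) ≫ T.d i ≫
        eqToHom (h (i + 1) (by omega)).symm) ∧
      ∃ δ : EE E (X.obj (n + 1)) (X.obj 0), σ.Dist X δ

/-- The realization `𝔯` of the bifunctor `E¹ = C(-, Σ-)` induced by the chosen
distinguished `n`-exangles `X → 0 → ⋯ → 0 → ΣX ⇢ δ_X`:
`𝔯(ε) := 𝔰(ε^* δ_{X₀})`, i.e. `⟨X, ε⟩` is `𝔯`-distinguished iff `⟨X, ε^* δ_{X₀}⟩`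
is `𝔰`-distinguished. -/
def DistR {n : ℕ} {E : Cᵒᵖ ⥤ C ⥤ AddCommGrpCat.{v}} (σ : NExStruct n C E) (F : C ⥤ C)
    (δ : ∀ X : C, EE E (F.obj X) X) :
    ∀ X : ExCpx n C, (X.obj (n + 1) ⟶ F.obj (X.obj 0)) → Prop :=
  fun X ε => σ.Dist X (pull ε (δ (X.obj 0)))

/-- Inflations with respect to a hom-valued (i.e. `E¹ = C(-, Σ-)`-valued)
distinguished-`n`-exangle predicate. -/
def HInflationOf {n : ℕ} (F : C ⥤ C)
    (R : ∀ X : ExCpx n C, (X.obj (n + 1) ⟶ F.obj (X.obj 0)) → Prop)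
    {A B : C} (f : A ⟶ B) : Prop :=
  ∃ (X : ExCpx n C) (ε : X.obj (n + 1) ⟶ F.obj (X.obj 0)) (h0 : X.obj 0 = A)
    (h1 : X.obj 1 = B), R X ε ∧ X.d 0 = eqToHom h0 ≫ f ≫ eqToHom h1.symm

/-- Deflations with respect to a hom-valued distinguished-`n`-exangle predicate. -/
def HDeflationOf {n : ℕ} (F : C ⥤ C)
    (R : ∀ X : ExCpx n C, (X.obj (n + 1) ⟶ F.obj (X.obj 0)) → Prop)
    {A B : C} (f : A ⟶ B) : Prop :=
  ∃ (X : ExCpx n C) (ε : X.obj (n + 1) ⟶ F.obj (X.obj 0)) (h0 : X.obj n = A)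
    (h1 : X.obj (n + 1) = B), R X ε ∧ X.d n = eqToHom h0 ≫ f ≫ eqToHom h1.symm

end Paper

/-!
Every `𝔰`-distinguished `n`-exangle `⟨X, ζ⟩` is also `𝔯`-distinguished, because `ζ` is a
pullback `ε^* δ_{X₀}`: the sequence `C(W, X'_{n+1}) → E(W, X'₀) → E(W, X'₁)` is exact for every
distinguished `n`-exangle `X'`, and for `X'` the chosen `X₀ → 0 → ⋯ → 0 → ΣX₀ ⇢ δ_{X₀}` the
last term vanishes. So `𝔯` and `𝔰` have the same inflations and deflations, and (EA1) for `𝔯`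
is (EA1) for `𝔰`.

The exactness is proved as in Herschend–Liu–Nakaoka: realize `θ ⊕ δ ∈ E(W ⊕ X'_{n+1}, X'₀)`
by some `V`, and apply (EA2) to the inclusion of `X'_{n+1}`. Since `θ` is killed by `d₀`,
the mapping cone carries the zero extension, so its last differential
`X'_{n+1} ⊕ Vₙ → V_{n+1}` is split epi; restricting a section to `W` factors `θ` through `δ`.
-/

namespace Paper

section PushPull

variable {C : Type u} [Category.{v} C] {E : Cᵒᵖ ⥤ C ⥤ AddCommGrpCat.{v}}

@[simp] lemma pull_id {B A : C} (d : EE E B A) : pull (𝟙 B) d = d := by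
  simp [pull]

lemma pull_comp {B'' B' B A : C} (g : B'' ⟶ B') (h : B' ⟶ B) (d : EE E B A) :
    pull (g ≫ h) d = pull g (pull h d) := by
  simp [pull]

@[simp] lemma push_id {B A : C} (d : EE E B A) : push (𝟙 A) d = d := by
  simp [push]

lemma push_comp {B A A' A'' : C} (f : A ⟶ A') (g : A' ⟶ A'') (d : EE E B A) :
    push (f ≫ g) d = push g (push f d) := by
  simp [push]

lemma pull_push {B B' A A' : C} (f : A ⟶ A') (g : B' ⟶ B) (d : EE E B A) :
    pull g (push f d) = push f (pull g d) :=
  ConcreteCategory.congr_hom ((E.map g.op).naturality f) d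

@[simp] lemma pull_add {B' B A : C} (g : B' ⟶ B) (x y : EE E B A) :
    pull g (x + y) = pull g x + pull g y :=
  map_add _ x y

@[simp] lemma pull_zero {B' B A : C} (g : B' ⟶ B) : pull g (0 : EE E B A) = 0 :=
  map_zero _

@[simp] lemma push_add {B A A' : C} (f : A ⟶ A') (x y : EE E B A) :
    push f (x + y) = push f x + push f y :=
  map_add _ x y

@[simp] lemma push_zero {B A A' : C} (f : A ⟶ A') : push f (0 : EE E B A) = 0 :=
  map_zero _

lemma castE_eq_push_pull {B B' A A' : C} (hB : B = B') (hA : A = A') (d : EE E B A) :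
    castE hB hA d = push (eqToHom hA) (pull (eqToHom hB.symm) d) := by
  subst hB hA
  simp [castE]

def PullSurjective {B A : C} (δ : EE E B A) : Prop :=
  ∀ W : C, Function.Surjective fun c : W ⟶ B => pull c δ

lemma pullSurjective_castE {B B' A A' : C} (hB : B = B') (hA : A = A') (δ : EE E B A) :
    PullSurjective (castE hB hA δ) ↔ PullSurjective δ := by
  subst hB hA
  rfl

variable [Preadditive C]

@[simp] lemma pull_zero_hom [E.Additive] {B' B A : C} (d : EE E B A) :
    pull (0 : B' ⟶ B) d = 0 := by
  simp [pull]

lemma pull_add_hom [E.Additive] {B' B A : C} (g h : B' ⟶ B) (d : EE E B A) :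
    pull (g + h) d = pull g d + pull h d := by
  simp [pull]

lemma eq_zero_of_isZero [∀ X : Cᵒᵖ, (E.obj X).Additive] {B A : C} (hA : IsZero A)
    (d : EE E B A) : d = 0 := by
  rw [← push_id d, hA.eq_of_src (𝟙 A) 0]
  simp [push]

end PushPull

section Exangulated

variable {C : Type u} [Category.{v} C] [Preadditive C] [HasZeroObject C]
  [HasFiniteBiproducts C] [HasBinaryBiproducts C] {E : Cᵒᵖ ⥤ C ⥤ AddCommGrpCat.{v}} {n : ℕ}
  (σ : NExStruct n C E)

lemma pull_eq_pull_of_comp_desc_eq_id [E.Additive] {V : ExCpx n C}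
    {ρ : EE E (V.obj (n + 1)) (V.obj 0)} (hV : σ.Dist V ρ) {Q : C} (c : Q ⟶ V.obj (n + 1))
    (s : V.obj (n + 1) ⟶ Q ⊞ V.obj n) (hs : s ≫ biprod.desc c (V.d n) = 𝟙 _) {W : C}
    (ι : W ⟶ V.obj (n + 1)) :
    pull ι ρ = pull (ι ≫ s ≫ biprod.fst) (pull c ρ) := by
  calc pull ι ρ = pull ((ι ≫ s ≫ biprod.fst) ≫ c) ρ + pull ((ι ≫ s ≫ biprod.snd) ≫ V.d n) ρ := by
        rw [← pull_add_hom]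
        congr 1
        simp only [Category.assoc, ← Preadditive.comp_add, ← biprod.desc_eq, hs,
          Category.comp_id]
    _ = pull (ι ≫ s ≫ biprod.fst) (pull c ρ) := by
        rw [pull_comp _ (V.d n), σ.attached_pull V ρ hV, pull_zero, add_zero, pull_comp]

lemma exists_comp_desc_eq_id_of_push_eq_zero (hn : 0 < n) {P V : ExCpx n C}
    {ρ : EE E (V.obj (n + 1)) (V.obj 0)} (hV : σ.Dist V ρ) (h0 : V.obj 0 = P.obj 0)
    (c : P.obj (n + 1) ⟶ V.obj (n + 1)) (hP : σ.Dist P (castE rfl h0 (pull c ρ)))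
    (hρ : push (eqToHom h0 ≫ P.d 0) ρ = 0) :
    ∃ s : V.obj (n + 1) ⟶ P.obj (n + 1) ⊞ V.obj n, s ≫ biprod.desc c (V.d n) = 𝟙 _ := by
  obtain ⟨φ, -, hφ, M, hM0, hMtop, ⟨-, etop, emid, -, -, hdn⟩, hM⟩ := σ.ea2 P V h0 ρ c hV hP
  rw [hρ, castE_eq_push_pull, pull_zero, push_zero] at hM
  obtain ⟨H, hH⟩ := σ.exact_contra_top M 0 hM _ (𝟙 _) (pull_zero _)
  refine ⟨eqToHom etop.symm ≫ H ≫ eqToHom (emid n hn le_rfl), ?_⟩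
  rw [hdn hn, hφ] at hH
  simpa using eqToHom etop.symm ≫= hH =≫ eqToHom etop

lemma exists_pull_eq_of_push_d_zero_eq_zero [∀ X : Cᵒᵖ, (E.obj X).Additive] [E.Additive]
    (hn : 0 < n) {P : ExCpx n C} {δP : EE E (P.obj (n + 1)) (P.obj 0)} (hP : σ.Dist P δP)
    {W : C} (θ : EE E W (P.obj 0)) (hθ : push (P.d 0) θ = 0) :
    ∃ c : W ⟶ P.obj (n + 1), pull c δP = θ := by
  set ρ : EE E (W ⊞ P.obj (n + 1)) (P.obj 0) := pull biprod.fst θ + pull biprod.snd δP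
  obtain ⟨V, hv0, hv1, hV⟩ := σ.realize ρ
  set ρV := castE hv1.symm hv0.symm ρ
  have hρV : ∀ {U : C} (u : U ⟶ W ⊞ P.obj (n + 1)),
      push (eqToHom hv0) (pull (u ≫ eqToHom hv1.symm) ρV) = pull u ρ := by
    intro U u
    simp [ρV, castE_eq_push_pull, ← push_comp, ← pull_comp, pull_push]
  set c := biprod.inr ≫ eqToHom hv1.symm
  have hc : push (eqToHom hv0) (pull c ρV) = δP := by
    simp [c, hρV, ρ, ← pull_comp]
  have hι : push (eqToHom hv0) (pull (biprod.inl ≫ eqToHom hv1.symm) ρV) = θ := by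
    simp [hρV, ρ, ← pull_comp]
  have hρ : push (eqToHom hv0 ≫ P.d 0) ρV = 0 := by
    have h := hρV (eqToHom hv1)
    simp only [eqToHom_trans, eqToHom_refl, pull_id] at h
    simp [push_comp, h, ← pull_push, ρ, hθ, σ.attached_push P δP hP]
  obtain ⟨s, hs⟩ := exists_comp_desc_eq_id_of_push_eq_zero σ hn hV hv0 c
    (by rwa [castE_eq_push_pull, eqToHom_refl, pull_id, hc]) hρ
  refine ⟨(biprod.inl ≫ eqToHom hv1.symm) ≫ s ≫ biprod.fst, ?_⟩
  rw [← hc, ← hι, pull_push,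
    pull_eq_pull_of_comp_desc_eq_id σ hV c s hs (biprod.inl ≫ eqToHom hv1.symm)]

lemma pullSurjective_of_isZero_obj_one [∀ X : Cᵒᵖ, (E.obj X).Additive] [E.Additive]
    (hn : 0 < n) {P : ExCpx n C} {δP : EE E (P.obj (n + 1)) (P.obj 0)} (hP : σ.Dist P δP)
    (hP1 : IsZero (P.obj 1)) : PullSurjective δP :=
  fun _ θ => exists_pull_eq_of_push_d_zero_eq_zero σ hn hP θ (eq_zero_of_isZero hP1 _)

variable {F : C ⥤ C} {δ : ∀ X : C, EE E (F.obj X) X}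

lemma hInflationOf_distR_iff (hδ : ∀ X, PullSurjective (δ X)) {A B : C} (f : A ⟶ B) :
    HInflationOf F (DistR σ F δ) f ↔ InflationOf σ.Dist f := by
  constructor
  · rintro ⟨X, ε, h0, h1, hX, hd⟩
    exact ⟨X, _, h0, h1, hX, hd⟩
  · rintro ⟨X, ζ, h0, h1, hX, hd⟩
    obtain ⟨ε, rfl⟩ := hδ (X.obj 0) _ ζ
    exact ⟨X, ε, h0, h1, hX, hd⟩

lemma hDeflationOf_distR_iff (hδ : ∀ X, PullSurjective (δ X)) {A B : C} (f : A ⟶ B) :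
    HDeflationOf F (DistR σ F δ) f ↔ DeflationOf σ.Dist f := by
  constructor
  · rintro ⟨X, ε, h0, h1, hX, hd⟩
    exact ⟨X, _, h0, h1, hX, hd⟩
  · rintro ⟨X, ζ, h0, h1, hX, hd⟩
    obtain ⟨ε, rfl⟩ := hδ (X.obj 0) _ ζ
    exact ⟨X, ε, h0, h1, hX, hd⟩

end Exangulated

theorem statement_14 {C : Type u} [Category.{v} C] [Preadditive C] [HasZeroObject C]
    [HasFiniteBiproducts C] [HasBinaryBiproducts C]
    (E : Cᵒᵖ ⥤ C ⥤ AddCommGrpCat.{v}) [∀ X : Cᵒᵖ, (E.obj X).Additive] [E.Additive]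
    (n : ℕ) (hn : 0 < n) (σ : NExStruct n C E)
    (htriv : ∀ X : C, TrivialInflation σ X ∧ TrivialDeflation σ X)
    (F : C ⥤ C) (cpx : C → ExCpx n C)
    (hc0 : ∀ X : C, (cpx X).obj 0 = X) (hctop : ∀ X : C, (cpx X).obj (n + 1) = F.obj X)
    (hmid : ∀ (X : C) (i : ℕ), 1 ≤ i → i ≤ n → IsZero ((cpx X).obj i))
    (δ : ∀ X : C, EE E (F.obj X) X)
    (hdist : ∀ X : C, σ.Dist (cpx X) (castE (hctop X).symm (hc0 X).symm (δ X)))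
    (hF : ∀ {X Y : C} (f : X ⟶ Y), push f (δ X) = pull (F.map f) (δ Y)) :
    (∀ {A B D : C} (f : A ⟶ B) (g : B ⟶ D),
      HInflationOf F (DistR σ F δ) f → HInflationOf F (DistR σ F δ) g →
      HInflationOf F (DistR σ F δ) (f ≫ g)) ∧
    (∀ {A B D : C} (f : A ⟶ B) (g : B ⟶ D),
      HDeflationOf F (DistR σ F δ) f → HDeflationOf F (DistR σ F δ) g →
      HDeflationOf F (DistR σ F δ) (f ≫ g)) := by
  have hδ : ∀ X, PullSurjective (δ X) := fun X =>
    (pullSurjective_castE _ _ _).1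
      (pullSurjective_of_isZero_obj_one σ hn (hdist X) (hmid X 1 le_rfl hn))
  simp only [hInflationOf_distR_iff σ hδ, hDeflationOf_distR_iff σ hδ]
  exact ⟨σ.ea1_infl, σ.ea1_defl⟩

end Paper
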